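/- Let C be a commutative unital ring, R a C-algebra, G a semigroup with zero, and t : \overline{CG} → R a C-linear trace. Then there exists a central map δ : G → R preserving zero such that t = t_δ; namely, one may take δ(g) = t(π(1·g)), where π : CG → \overline{CG} is the quotient map and 1·g denotes the finitely supported function which is 1 at g and 0 elsewhere. -/

import Mathlib

/-- The one-step relation: `x = a*b` and `y = b*a`. -/
def simStep {G : Type*} [Mul G] (x y : G) : Prop := ∃ a b : G, x = a * b ∧ y = b * a

/-- The relation `~` on a semigroup: the reflexive-transitive closure of `simStep`. -/
def sim {G : Type*} [Mul G] : G → G → Prop := Relation.ReflTransGen simStep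

theorem sim_equiv {G : Type*} [Mul G] : Equivalence (sim (G := G)) :=
  ⟨fun _ => Relation.ReflTransGen.refl,
   fun h => (@Relation.ReflTransGen.stdSymm _ _ ⟨
      (fun _ _ ⟨a, b, h1, h2⟩ => ⟨b, a, h2, h1⟩)⟩).symm _ _ h,
   fun h1 h2 => Relation.ReflTransGen.trans h1 h2⟩

/-- The setoid on `G` given by `~`. -/
def simSetoid (G : Type*) [Mul G] : Setoid G := ⟨sim, sim_equiv⟩

/-- The additive subgroup `[A,A]` generated by commutators. -/
def commutatorSubgroup (A : Type*) [NonUnitalNonAssocRing A] : AddSubgroup A :=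
  AddSubgroup.closure {x | ∃ a b : A, x = a * b - b * a}

/-- The ideal `I₀` of the semigroup ring `CG` consisting of functions supported in `{0}`. -/
noncomputable def I0 (C G : Type*) [CommRing C] [SemigroupWithZero G] :
    TwoSidedIdeal (MonoidAlgebra C G) :=
  TwoSidedIdeal.mk' {f : MonoidAlgebra C G | ∀ g : G, g ≠ 0 → f.coeff g = 0}
    (fun _ _ => rfl)
    (fun {x y} hx hy g hg => by
      show (x + y).coeff g = 0
      rw [MonoidAlgebra.coeff_add, Finsupp.add_apply, hx g hg, hy g hg, add_zero])
    (fun {x} hx g hg => by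
      show (-x).coeff g = 0
      rw [MonoidAlgebra.coeff_neg, Finsupp.neg_apply, hx g hg, neg_zero])
    (fun {x y} hy g hg => by
      classical
      rw [MonoidAlgebra.coeff_mul]
      rw [Finsupp.sum]
      refine Finset.sum_eq_zero fun a _ => ?_
      rw [Finsupp.sum]
      refine Finset.sum_eq_zero fun b hb => ?_
      have hb0 : b = 0 := by
        by_contra h
        exact Finsupp.mem_support_iff.mp hb (hy b h)
      subst hb0
      rw [mul_zero, if_neg fun h => hg h.symm])
    (fun {x y} hx g hg => by
      classical
      rw [MonoidAlgebra.coeff_mul]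
      rw [Finsupp.sum]
      refine Finset.sum_eq_zero fun a ha => ?_
      rw [Finsupp.sum]
      refine Finset.sum_eq_zero fun b _ => ?_
      have ha0 : a = 0 := by
        by_contra h
        exact Finsupp.mem_support_iff.mp ha (hx a h)
      subst ha0
      rw [zero_mul, if_neg fun h => hg h.symm])

/-- The contracted semigroup ring `\overline{CG} = CG / I₀`. -/
abbrev ContractedSemigroupRing (C G : Type*) [CommRing C] [SemigroupWithZero G] :=
  (I0 C G).ringCon.Quotient

/-- The quotient map `π : CG → \overline{CG}`. -/
noncomputable def toCSR (C G : Type*) [CommRing C] [SemigroupWithZero G]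
    (f : MonoidAlgebra C G) : ContractedSemigroupRing C G := f

/-- The map `f ↦ ∑_g f(g) • δ(g)` from `CG` to `R`. -/
def elemSum (C : Type*) {G R : Type*} [CommRing C] [SemigroupWithZero G]
    [AddCommMonoid R] [Module C R] (δ : G → R) (f : MonoidAlgebra C G) : R :=
  f.coeff.sum fun g c => c • δ g

section ContractedSemigroupRing

variable {C G : Type*} [CommRing C] [SemigroupWithZero G]

theorem toCSR_mul (a b : MonoidAlgebra C G) :
    toCSR C G (a * b) = toCSR C G a * toCSR C G b :=
  rfl

theorem toCSR_single_zero (c : C) : toCSR C G (MonoidAlgebra.single 0 c) = 0 := by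
  refine Quotient.sound ((TwoSidedIdeal.rel_iff _ _ _).mpr ?_)
  rw [sub_zero]
  exact (TwoSidedIdeal.mem_mk' _ _ _ _ _ _ _).mpr fun g hg =>
    Finsupp.single_eq_of_ne' (Ne.symm hg)

theorem LinearMap.eq_elemSum {M : Type*} [AddCommMonoid M] [Module C M]
    (L : MonoidAlgebra C G →ₗ[C] M) (f : MonoidAlgebra C G) :
    L f = elemSum C (fun g => L (MonoidAlgebra.single g 1)) f := by
  conv_lhs => rw [← MonoidAlgebra.sum_coeff_single f]
  rw [map_finsuppSum]
  refine Finsupp.sum_congr fun g _ => ?_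
  rw [← map_smul, MonoidAlgebra.smul_single, smul_eq_mul, mul_one]

end ContractedSemigroupRing

theorem semigroupRing_trace_is_induced_general
    {C G R : Type*} [CommRing C] [SemigroupWithZero G]
    [NonUnitalRing R] [Module C R]
    (t : ContractedSemigroupRing C G → R)
    (hadd : ∀ x y : ContractedSemigroupRing C G, t (x + y) = t x + t y)
    (htrace : ∀ x y : ContractedSemigroupRing C G, t (x * y) = t (y * x))
    (hlin : ∀ (c : C) (f : MonoidAlgebra C G),
      t (toCSR C G (c • f)) = c • t (toCSR C G f)) :
    ∃ δ : G → R,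
      (∀ g : G, δ g = t (toCSR C G (MonoidAlgebra.single g 1))) ∧
      (∀ g h : G, δ (g * h) = δ (h * g)) ∧
      δ 0 = 0 ∧
      ∀ f : MonoidAlgebra C G, t (toCSR C G f) = elemSum C δ f := by
  let L : MonoidAlgebra C G →ₗ[C] R :=
    { toFun := fun f => t (toCSR C G f)
      map_add' := fun a b => hadd (toCSR C G a) (toCSR C G b)
      map_smul' := hlin }
  refine ⟨fun g => L (MonoidAlgebra.single g 1), fun _ => rfl, fun g h => ?_, ?_, L.eq_elemSum⟩
  · show t (toCSR C G _) = t (toCSR C G _)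
    rw [← one_mul (1 : C), ← MonoidAlgebra.single_mul_single, ← MonoidAlgebra.single_mul_single,
      toCSR_mul, toCSR_mul]
    exact htrace _ _
  · show t (toCSR C G _) = 0
    rw [toCSR_single_zero]
    exact (AddMonoidHom.mk' t hadd).map_zero

/-- Every `C`-linear trace `t : \overline{CG} → R` is of the form `t_δ`
for the central zero-preserving map `δ(g) = t(π(1·g))`. -/
theorem semigroupRing_trace_is_induced
    {C G R : Type*} [CommRing C] [SemigroupWithZero G]
    [NonUnitalRing R] [Module C R] [SMulCommClass C R R] [IsScalarTower C R R]
    (t : ContractedSemigroupRing C G → R)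
    (hadd : ∀ x y : ContractedSemigroupRing C G, t (x + y) = t x + t y)
    (htrace : ∀ x y : ContractedSemigroupRing C G, t (x * y) = t (y * x))
    (hlin : ∀ (c : C) (f : MonoidAlgebra C G),
      t (toCSR C G (c • f)) = c • t (toCSR C G f)) :
    ∃ δ : G → R,
      (∀ g : G, δ g = t (toCSR C G (MonoidAlgebra.single g 1))) ∧
      (∀ g h : G, δ (g * h) = δ (h * g)) ∧
      δ 0 = 0 ∧
      ∀ f : MonoidAlgebra C G, t (toCSR C G f) = elemSum C δ f :=
  semigroupRing_trace_is_induced_general t hadd htrace hlin
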